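/- For all integers N ≥ 3 and k ≥ 0, every i ∈ {1,…,N} and every integer v with 0 ≤ v ≤ k, in the Pólya urn model with N colours and k draws one has the pointwise upper bound P(X_i = v) ≤ ((N−1)/(k+N−1))·exp(−(N−2)·v/(k+N)). -/

import Mathlib

attribute [local instance] Classical.propDecidable

/-- The set of colour-count vectors of the Pólya urn with `N` colours and `k` draws:
all `(v_1, …, v_N) ∈ ℤ_{≥0}^N` with `v_1 + ⋯ + v_N = k`.  The colour-count vector
`(X_1, …, X_N)` is uniformly distributed on this set. -/
def urnSet (N k : ℕ) : Finset (Fin N → ℕ) :=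
  (Fintype.piFinset fun _ => Finset.range (k + 1)).filter fun v => ∑ i, v i = k

lemma mem_urnSet {N k : ℕ} {x : Fin N → ℕ} : x ∈ urnSet N k ↔ ∑ i, x i = k := by
  simp only [urnSet, Finset.mem_filter, Fintype.mem_piFinset, Finset.mem_range]
  constructor
  · rintro ⟨_, h⟩; exact h
  · intro h
    refine ⟨fun i => ?_, h⟩
    have := Finset.single_le_sum (f := x) (fun _ _ => Nat.zero_le _) (Finset.mem_univ i)
    omega

lemma card_fiber (N k : ℕ) (i : Fin (N + 1)) (v : ℕ) (hv : v ≤ k) :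
    ((urnSet (N + 1) k).filter fun x => x i = v).card = (urnSet N (k - v)).card := by
  apply Finset.card_nbij' (fun x => x ∘ i.succAbove) (fun y => i.insertNth v y)
  · intro x hx
    rw [Finset.mem_coe, Finset.mem_filter] at hx
    obtain ⟨hx1, hx2⟩ := hx
    rw [mem_urnSet] at hx1; rw [Finset.mem_coe, mem_urnSet]
    have := Fin.sum_univ_succAbove x i
    simp only [Function.comp] at *
    omega
  · intro y hy
    rw [Finset.mem_coe, mem_urnSet] at hy
    rw [Finset.mem_coe, Finset.mem_filter, mem_urnSet]
    rw [Fin.sum_univ_succAbove _ i]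
    simp only [Fin.insertNth_apply_same, Fin.insertNth_apply_succAbove]
    rw [hy]
    exact ⟨by omega, trivial⟩
  · intro x hx
    rw [Finset.mem_coe, Finset.mem_filter] at hx
    rw [← hx.2]
    exact Fin.insertNth_self_removeNth i x
  · intro y _
    funext j
    simp [Function.comp, Fin.insertNth_apply_succAbove]

lemma card_urnSet : ∀ (N k : ℕ), (urnSet (N + 1) k).card = (N + k).choose k := by
  intro N
  induction N with
  | zero =>
    intro k
    have h : urnSet 1 k = {fun _ => k} := by
      ext x
      simp only [mem_urnSet, Finset.mem_singleton, Fin.sum_univ_one]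
      constructor
      · intro h; funext j; rw [Subsingleton.elim j 0]; exact h
      · intro h; rw [h]
    rw [h]; simp
  | succ n ih =>
    intro k
    have hmaps : ∀ x ∈ urnSet (n + 1 + 1) k,
        x (Fin.last (n + 1)) ∈ Finset.range (k + 1) := by
      intro x hx
      rw [mem_urnSet] at hx
      rw [Finset.mem_range]
      have := Finset.single_le_sum (f := x) (fun _ _ => Nat.zero_le _)
        (Finset.mem_univ (Fin.last (n + 1)))
      omega
    rw [Finset.card_eq_sum_card_fiberwise hmaps]
    have step : ∀ v ∈ Finset.range (k + 1),
        ((urnSet (n + 1 + 1) k).filter fun x => x (Fin.last (n + 1)) = v).card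
          = (n + (k - v)).choose (k - v) := by
      intro v hv
      rw [Finset.mem_range] at hv
      rw [card_fiber (n + 1) k (Fin.last (n + 1)) v (by omega), ih]
    rw [Finset.sum_congr rfl step]
    have reflect := Finset.sum_range_reflect (fun j => (n + j).choose j) (k + 1)
    simp only [Nat.add_sub_cancel] at reflect
    have e1 : ∀ j, (n + j).choose j = (j + n).choose n := by
      intro j
      have h := Nat.choose_symm (Nat.le_add_right n j)
      rw [Nat.add_sub_cancel_left] at h
      rw [add_comm j n]
      exact h
    have h2 := Nat.choose_symm (show n + 1 ≤ n + 1 + k by omega)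
    rw [show n + 1 + k - (n + 1) = k from by omega] at h2
    calc ∑ v ∈ Finset.range (k + 1), (n + (k - v)).choose (k - v)
        = ∑ j ∈ Finset.range (k + 1), (n + j).choose j := reflect
      _ = ∑ j ∈ Finset.range (k + 1), (j + n).choose n :=
          Finset.sum_congr rfl fun j _ => e1 j
      _ = (k + n + 1).choose (n + 1) := Nat.sum_range_add_choose k n
      _ = (n + 1 + k).choose k := by
          rw [h2, show k + n + 1 = n + 1 + k from by omega]

lemma fact_add (a s : ℕ) :
    (a + s).factorial = a.factorial * ∏ j ∈ Finset.range s, (a + j + 1) := by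
  induction s with
  | zero => simp
  | succ s ih =>
    rw [← Nat.add_assoc, Nat.factorial_succ, ih, Finset.prod_range_succ]
    ring

lemma key_real (m k v : ℕ) (hv : v ≤ k) :
    (((m + (k - v)).choose (k - v) : ℝ)) / (((m + 1 + k).choose k : ℝ)) ≤
      ((m : ℝ) + 1) / ((k : ℝ) + m + 1) *
        Real.exp (-((m : ℝ) * v) / ((k : ℝ) + m + 2)) := by
  have hK : ((k - v : ℕ) : ℝ) = (k : ℝ) - v := by
    push_cast [Nat.cast_sub hv]; ring
  have e1 : (((m + (k - v)).choose (k - v) : ℝ)) =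
      (∏ j ∈ Finset.range m, ((k : ℝ) - v + j + 1)) / (m.factorial : ℝ) := by
    rw [Nat.cast_choose ℝ (Nat.le_add_left _ _)]
    rw [show m + (k - v) - (k - v) = m from by omega]
    rw [show m + (k - v) = (k - v) + m from by omega, fact_add]
    push_cast [hK]
    rw [mul_div_mul_left _ _ (by positivity : (((k - v).factorial : ℕ) : ℝ) ≠ 0)]
  have e2 : (((m + 1 + k).choose k : ℝ)) =
      ((∏ j ∈ Finset.range m, ((k : ℝ) + j + 1)) * ((k : ℝ) + m + 1)) /
        ((m + 1).factorial : ℝ) := by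
    rw [Nat.cast_choose ℝ (Nat.le_add_left _ _)]
    rw [show m + 1 + k - k = m + 1 from by omega]
    rw [show m + 1 + k = k + (m + 1) from by omega, fact_add]
    rw [Finset.prod_range_succ]
    push_cast
    rw [mul_div_mul_left _ _ (by positivity : ((k.factorial : ℕ) : ℝ) ≠ 0)]
  have hprodden : (0 : ℝ) < ∏ j ∈ Finset.range m, ((k : ℝ) + j + 1) := by
    apply Finset.prod_pos; intro j _; positivity
  have hratio : (((m + (k - v)).choose (k - v) : ℝ)) / (((m + 1 + k).choose k : ℝ)) =
      ((m : ℝ) + 1) / ((k : ℝ) + m + 1) *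
        ∏ j ∈ Finset.range m, (((k : ℝ) - v + j + 1) / ((k : ℝ) + j + 1)) := by
    rw [e1, e2, Finset.prod_div_distrib]
    rw [Nat.factorial_succ]
    have h1 : ((m.factorial : ℝ)) ≠ 0 := by positivity
    have h2 : ((k : ℝ) + m + 1) ≠ 0 := by positivity
    have h3 : (∏ j ∈ Finset.range m, ((k : ℝ) + j + 1)) ≠ 0 := ne_of_gt hprodden
    field_simp
    push_cast
    ring
  rw [hratio]
  apply mul_le_mul_of_nonneg_left _ (by positivity)
  have hbound : ∀ j ∈ Finset.range m,
      ((k : ℝ) - v + j + 1) / ((k : ℝ) + j + 1) ≤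
        Real.exp (-(v : ℝ) / ((k : ℝ) + m + 2)) := by
    intro j hj
    rw [Finset.mem_range] at hj
    have hd : (0 : ℝ) < (k : ℝ) + j + 1 := by positivity
    have hdd : (0 : ℝ) < (k : ℝ) + m + 2 := by positivity
    have step1 : ((k : ℝ) - v + j + 1) / ((k : ℝ) + j + 1) =
        1 - (v : ℝ) / ((k : ℝ) + j + 1) := by
      field_simp
      ring
    have step2 : (v : ℝ) / ((k : ℝ) + m + 2) ≤ (v : ℝ) / ((k : ℝ) + j + 1) := by
      apply div_le_div_of_nonneg_left (by positivity) hd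
      have : (j : ℝ) ≤ m := by exact_mod_cast hj.le
      linarith
    have step3 : -(v : ℝ) / ((k : ℝ) + m + 2) + 1 ≤
        Real.exp (-(v : ℝ) / ((k : ℝ) + m + 2)) := Real.add_one_le_exp _
    rw [step1]
    have : 1 - (v : ℝ) / ((k : ℝ) + j + 1) ≤ 1 - (v : ℝ) / ((k : ℝ) + m + 2) := by
      linarith
    calc 1 - (v : ℝ) / ((k : ℝ) + j + 1)
        ≤ 1 - (v : ℝ) / ((k : ℝ) + m + 2) := this
      _ = -(v : ℝ) / ((k : ℝ) + m + 2) + 1 := by ring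
      _ ≤ _ := step3
  calc ∏ j ∈ Finset.range m, (((k : ℝ) - v + j + 1) / ((k : ℝ) + j + 1))
      ≤ ∏ j ∈ Finset.range m, Real.exp (-(v : ℝ) / ((k : ℝ) + m + 2)) := by
        apply Finset.prod_le_prod
        · intro j _
          have hkv : (v : ℝ) ≤ k := by exact_mod_cast hv
          have : (0 : ℝ) ≤ (k : ℝ) - v + j + 1 := by
            have : (0:ℝ) ≤ (j:ℝ) := by positivity
            linarith
          positivity
        · exact hbound
    _ = Real.exp (-((m : ℝ) * v) / ((k : ℝ) + m + 2)) := by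
        rw [Finset.prod_const, Finset.card_range, ← Real.exp_nat_mul]
        congr 1
        ring

/-- The probability, in the Pólya urn model with `N` colours and `k` draws, that the
colour-count vector `(X_1, …, X_N)` satisfies the predicate `p`, expressed as a
counting ratio over the uniform distribution on `urnSet N k`. -/
noncomputable def urnProb (N k : ℕ) (p : (Fin N → ℕ) → Prop) : ℝ :=
  ((urnSet N k).filter p).card / (urnSet N k).card

theorem polya_pointwise_upper_bound (N k : ℕ) (hN : 3 ≤ N) (i : Fin N) (v : ℕ)
    (hv : v ≤ k) :
    urnProb N k (fun x => x i = v) ≤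
      ((N : ℝ) - 1) / ((k : ℝ) + N - 1) *
        Real.exp (-(((N : ℝ) - 2) * v) / ((k : ℝ) + N)) := by
  obtain ⟨m, rfl⟩ : ∃ m, N = m + 3 := ⟨N - 3, by omega⟩
  rw [urnProb]
  have hA : ((urnSet (m + 3) k).filter (fun x => x i = v)).card
      = ((m + 1) + (k - v)).choose (k - v) := by
    have h := card_fiber (m + 2) k i v hv
    rw [h, card_urnSet]
  have hB : (urnSet (m + 3) k).card = ((m + 2) + k).choose k := card_urnSet (m + 2) k
  rw [hB]
  rw [Finset.filter_congr_decidable] at hA ⊢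
  rw [hA]
  refine le_trans (key_real (m + 1) k v hv) (le_of_eq ?_)
  push_cast
  ring_nf
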